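/- With the setup above, letting Ẑ = min_{x,y} q(X=x | Ŷ=y) (which is strictly positive), the expected cross-entropy risk is upper bounded: E_{x∼p(X)} [ −∑_y p(y|x) log q(Ŷ=y|x) ] ≤ H[p(Y), q(Ŷ)] − H[p(X)] − log Ẑ. -/
import Mathlib


open Finset Real

/-- Upper bound on the expected cross-entropy risk
    (Proposition 1, upper part), with Ẑ the minimal posterior probability. -/
theorem risk_upper_bound
    {X Y : Type*} [Fintype X] [Fintype Y] [Nonempty X] [Nonempty Y]
    (pX : X → ℝ) (pYX : X → Y → ℝ) (q : X → Y → ℝ)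
    (hpXpos : ∀ x, 0 < pX x) (hpXsum : ∑ x, pX x = 1)
    (hpYXnn : ∀ x y, 0 ≤ pYX x y) (hpYXsum : ∀ x, ∑ y, pYX x y = 1)
    (hqpos : ∀ x y, 0 < q x y) (hqsum : ∀ x, ∑ y, q x y = 1)
    (pY : Y → ℝ) (hpY : ∀ y, pY y = ∑ x, pX x * pYX x y)
    (qY : Y → ℝ) (hqY : ∀ y, qY y = ∑ x, pX x * q x y)
    (post : X → Y → ℝ) (hpost : ∀ x y, post x y = pX x * q x y / qY y)
    (Z : ℝ) (hZ : Z = ⨅ p : X × Y, post p.1 p.2) :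
    ∑ x, pX x * (∑ y, pYX x y * (-Real.log (q x y)))
      ≤ (-∑ y, pY y * Real.log (qY y)) - (-∑ x, pX x * Real.log (pX x))
        - Real.log Z := by
  have hqYpos : ∀ y, 0 < qY y := by
    intro y; rw [hqY]
    exact Finset.sum_pos (fun x _ => mul_pos (hpXpos x) (hqpos x y))
      Finset.univ_nonempty
  have hpostpos : ∀ x y, 0 < post x y := fun x y => by
    rw [hpost]; exact div_pos (mul_pos (hpXpos x) (hqpos x y)) (hqYpos y)
  obtain ⟨p0, hp0⟩ := Finite.exists_min (fun p : X × Y => post p.1 p.2)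
  have hZeq : Z = post p0.1 p0.2 := by
    rw [hZ]
    exact le_antisymm (ciInf_le (Finite.bddBelow_range _) p0) (le_ciInf hp0)
  have hZpos : 0 < Z := hZeq ▸ hpostpos _ _
  have hZle : ∀ x y, Z ≤ post x y := fun x y => hZeq ▸ hp0 (x, y)
  have key : ∀ x y, -Real.log (q x y)
      ≤ -Real.log (qY y) + Real.log (pX x) - Real.log Z := by
    intro x y
    have hq : q x y = post x y * qY y / pX x := by
      have h1 := (hpXpos x).ne'
      have h2 := (hqYpos y).ne'
      rw [hpost]; field_simp
    rw [hq, Real.log_div (mul_pos (hpostpos x y) (hqYpos y)).ne' (ne_of_gt (hpXpos x)),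
      Real.log_mul (ne_of_gt (hpostpos x y)) (ne_of_gt (hqYpos y))]
    have := Real.log_le_log hZpos (hZle x y)
    linarith
  have step1 : ∑ x, pX x * (∑ y, pYX x y * (-Real.log (q x y)))
      ≤ ∑ x, pX x * (∑ y, pYX x y *
          (-Real.log (qY y) + Real.log (pX x) - Real.log Z)) := by
    apply Finset.sum_le_sum; intro x _
    apply mul_le_mul_of_nonneg_left _ (le_of_lt (hpXpos x))
    apply Finset.sum_le_sum; intro y _
    exact mul_le_mul_of_nonneg_left (key x y) (hpYXnn x y)
  refine step1.trans (le_of_eq ?_)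
  have expand : ∀ x, ∑ y, pYX x y *
        (-Real.log (qY y) + Real.log (pX x) - Real.log Z)
      = (∑ y, pYX x y * (-Real.log (qY y))) + Real.log (pX x) - Real.log Z := by
    intro x
    rw [Finset.sum_congr rfl (fun y _ => by ring :
      ∀ y ∈ Finset.univ, pYX x y * (-Real.log (qY y) + Real.log (pX x) - Real.log Z)
        = pYX x y * (-Real.log (qY y)) + pYX x y * (Real.log (pX x) - Real.log Z)),
      Finset.sum_add_distrib, ← Finset.sum_mul, hpYXsum, one_mul]
    ring
  have swap : ∑ x, pX x * (∑ y, pYX x y * (-Real.log (qY y)))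
      = -∑ y, pY y * Real.log (qY y) := by
    simp_rw [Finset.mul_sum, ← mul_assoc]
    rw [Finset.sum_comm, ← Finset.sum_neg_distrib]
    apply Finset.sum_congr rfl
    intro y _
    rw [← Finset.sum_mul, ← hpY]
    ring
  simp_rw [expand]
  have distrib : ∀ x, pX x * ((∑ y, pYX x y * (-Real.log (qY y)))
        + Real.log (pX x) - Real.log Z)
      = pX x * (∑ y, pYX x y * (-Real.log (qY y)))
        + pX x * Real.log (pX x) - pX x * Real.log Z := fun x => by ring
  simp_rw [distrib, Finset.sum_sub_distrib, Finset.sum_add_distrib,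
    ← Finset.sum_mul, hpXsum, one_mul, swap]
  ring
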